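/- Work in the real Hilbert space ℓ² = ℓ²(ℕ; ℝ) with its norm topology and coordinatewise order, and let I_d be the ideal of subsets of ℕ of natural density zero. Define t_n = 2 for all n and x_n = e_n, the n-th standard unit vector of ℓ². Then: (i) the sequence x = (x_n) is weighted I_τ-bounded, i.e., for every neighborhood U of zero there exists λ > 0 with {n ∈ ℕ : λ t_n x_n ∉ U} ∈ I_d; but (ii) the weighted I_τ-cluster point set of x is empty, i.e., for every c ∈ ℓ² there exists a neighborhood U of zero such that {n ∈ ℕ : t_n(x_n − c) ∈ U} ∈ I_d. -/

import Mathlib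

open Topology Filter Set

/-- The ideal of subsets of ℕ of natural density zero. -/
def densityZeroIdeal : Set (Set ℕ) :=
  {A | Tendsto (fun n : ℕ => ((A ∩ Set.Icc 1 n).ncard : ℝ) / n) atTop (𝓝 0)}

/-- The real Hilbert space ℓ² of square-summable real sequences. -/
noncomputable abbrev ellTwo : Type := lp (fun _ : ℕ => ℝ) 2

/-- The `n`-th standard unit vector of ℓ². -/
noncomputable def stdUnitVec (n : ℕ) : ellTwo := lp.single 2 n (1 : ℝ)

/-! The unit vectors have norm one, so a single small `λ` puts every `λ t_n e_n` inside a given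
ball around zero. On the other hand distinct unit vectors are at distance at least one, so a ball
of radius `1/2` around any `c` contains at most one `e_n`: the set of indices is finite and hence
of density zero. -/

lemma finite_mem_densityZeroIdeal {A : Set ℕ} (hA : A.Finite) : A ∈ densityZeroIdeal := by
  refine squeeze_zero (fun n => by positivity) (fun n => ?_)
    (tendsto_const_div_atTop_nhds_zero_nat (A.ncard : ℝ))
  have hle : ((A ∩ Icc 1 n).ncard : ℝ) ≤ A.ncard := by
    exact_mod_cast ncard_le_ncard inter_subset_left hA
  exact div_le_div_of_nonneg_right hle n.cast_nonneg

lemma exists_pos_smul_mem_of_norm_le {E ι : Type*} [SeminormedAddCommGroup E] [NormedSpace ℝ E]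
    {y : ι → E} {M : ℝ} (hy : ∀ i, ‖y i‖ ≤ M) {U : Set E} (hU : U ∈ 𝓝 0) :
    ∃ lam : ℝ, 0 < lam ∧ ∀ i, lam • y i ∈ U := by
  obtain ⟨ε, hε, hball⟩ := Metric.mem_nhds_iff.mp hU
  refine ⟨ε / (|M| + 1), by positivity, fun i => hball ?_⟩
  rw [mem_ball_zero_iff, norm_smul, Real.norm_of_nonneg (by positivity)]
  calc ε / (|M| + 1) * ‖y i‖ ≤ ε / (|M| + 1) * |M| := by
        gcongr; exact (hy i).trans (le_abs_self M)
    _ < ε / (|M| + 1) * (|M| + 1) := by gcongr; linarith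
    _ = ε := div_mul_cancel₀ ε (by positivity)

lemma subsingleton_setOf_dist_lt_of_pairwise_le_dist {X : Type*} [PseudoMetricSpace X]
    {x : ℕ → X} {r : ℝ} (hx : Pairwise fun n m => r ≤ dist (x n) (x m)) (c : X) :
    {n | dist (x n) c < r / 2}.Subsingleton := by
  intro n hn m hm
  by_contra hnm
  linarith [hx hnm, dist_triangle_right (x n) (x m) c, hn.out, hm.out]

lemma norm_stdUnitVec (n : ℕ) : ‖stdUnitVec n‖ = 1 := by
  simp [stdUnitVec, lp.norm_single]

lemma pairwise_one_le_dist_stdUnitVec :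
    Pairwise fun n m => 1 ≤ dist (stdUnitVec n) (stdUnitVec m) := by
  intro n m h
  have hcoord := lp.norm_apply_le_norm (p := 2) (by norm_num) (stdUnitVec n - stdUnitVec m) n
  simpa [stdUnitVec, lp.single_apply, h, dist_eq_norm] using hcoord

/-- In ℓ² with weights `t n = 2` and `x n = e n` the standard unit vectors:
(i) the sequence is weighted `I`-τ-bounded for the density-zero ideal; but (ii) its weighted
`I`-τ-cluster point set is empty. -/
theorem ellTwo_weighted_bounded_but_no_cluster_points :
    (∀ U ∈ 𝓝 (0 : ellTwo), ∃ lam : ℝ, 0 < lam ∧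
        {n : ℕ | (lam * 2) • stdUnitVec n ∉ U} ∈ densityZeroIdeal) ∧
    (∀ c : ellTwo, ∃ U ∈ 𝓝 (0 : ellTwo),
        {n : ℕ | (2 : ℝ) • (stdUnitVec n - c) ∈ U} ∈ densityZeroIdeal) := by
  constructor
  · intro U hU
    have hnorm : ∀ n, ‖(2 : ℝ) • stdUnitVec n‖ ≤ 2 := fun n => by
      rw [norm_smul, norm_stdUnitVec, Real.norm_two, mul_one]
    obtain ⟨lam, hlam, hmem⟩ := exists_pos_smul_mem_of_norm_le hnorm hU
    refine ⟨lam, hlam, finite_mem_densityZeroIdeal (Set.finite_empty.subset fun n hn => ?_)⟩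
    exact hn (by rw [mul_smul]; exact hmem n)
  · intro c
    refine ⟨Metric.ball 0 1, Metric.ball_mem_nhds 0 one_pos, finite_mem_densityZeroIdeal ?_⟩
    refine (subsingleton_setOf_dist_lt_of_pairwise_le_dist
      pairwise_one_le_dist_stdUnitVec c).finite.subset fun n hn => ?_
    have hn : ‖(2 : ℝ) • (stdUnitVec n - c)‖ < 1 := mem_ball_zero_iff.mp hn
    rw [norm_smul, Real.norm_two, ← dist_eq_norm] at hn
    exact (by linarith : dist (stdUnitVec n) c < 1 / 2)
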